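/- arXiv:2307.16810 — 5 statements merged into one kernel-verified Lean document; each statement's English description precedes it below -/
import Mathlib

section
/- In the setup of 𝔰𝔩(2,ℝ) with A as above, the only lines ℝv with v ≠ 0 satisfying [Av, v] ∈ ℝ·A v (radial solutions of the geodesic equation) are ℝ e and ℝ v₀ where v₀ = (3/8)e - (1/2)h + f. -/
/-!
Write `v = x e + y h + z f`. A direct computation gives
`A⁻¹[Av, v] = (y² - xz + yz + z²) e - (yz + z²) h + z² f`, so radiality is a polynomial
system in `x, y, z, λ`. If `z ≠ 0`, the `f`-coordinate forces `λ = z`, then the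
`h`-coordinate gives `y = -z/2` and the `e`-coordinate `x = 3z/8`. If `z = 0`, the
`h`-coordinate gives `λ y = 0` and the `e`-coordinate `y² = λ x`, so `y = 0`.
-/

section Coordinates

variable {K M : Type*} [CommRing K] [AddCommGroup M] [Module K M]

theorem LinearIndependent.eq_and_eq_and_eq_of_three {e h f : M}
    (hli : LinearIndependent K ![e, h, f]) {p q r p' q' r' : K}
    (H : p • e + q • h + r • f = p' • e + q' • h + r' • f) :
    p = p' ∧ q = q' ∧ r = r' := by
  rw [Fintype.linearIndependent_iff] at hli
  have hzero := hli ![p - p', q - q', r - r'] (by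
    simp only [Fin.sum_univ_three, Matrix.cons_val_zero, Matrix.cons_val_one, Matrix.cons_val_two,
      Matrix.head_cons, Matrix.tail_cons]
    linear_combination (norm := module) H)
  exact ⟨sub_eq_zero.mp (hzero 0), sub_eq_zero.mp (hzero 1), sub_eq_zero.mp (hzero 2)⟩

theorem Module.Basis.coe_eq_three (b : Module.Basis (Fin 3) K M) : ⇑b = ![b 0, b 1, b 2] := by
  ext i; fin_cases i <;> rfl

theorem Module.Basis.exists_eq_three (b : Module.Basis (Fin 3) K M) (v : M) :
    ∃ x y z : K, v = x • b 0 + y • b 1 + z • b 2 :=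
  ⟨b.repr v 0, b.repr v 1, b.repr v 2, by
    conv_lhs => rw [← b.sum_repr v]
    rw [Fin.sum_univ_three]⟩

end Coordinates

theorem radial_coords_iff {K : Type*} [Field K] [CharZero K] (x y z : K) :
    (∃ lam : K, y ^ 2 - x * z + y * z + z ^ 2 = lam * x ∧ -(y * z) - z ^ 2 = lam * y ∧
        z ^ 2 = lam * z) ↔
      (y = 0 ∧ z = 0) ∨ (x = 3 / 8 * z ∧ y = -(1 / 2) * z) := by
  constructor
  · rintro ⟨lam, E1, E2, E3⟩
    by_cases hz : z = 0
    · subst hz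
      refine .inl ⟨?_, rfl⟩
      by_contra hy
      have hlam : lam = 0 :=
        (mul_eq_zero.mp (by linear_combination -E2 : lam * y = 0)).resolve_right hy
      exact hy (pow_eq_zero_iff two_ne_zero |>.mp (by linear_combination E1 + x * hlam))
    · have hlam : lam = z := (mul_right_cancel₀ hz (by linear_combination -E3 : lam * z = z * z))
      subst hlam
      have hy : y = -(1 / 2) * lam := mul_left_cancel₀ hz (by linear_combination -E2 / 2)
      subst hy
      exact .inr ⟨mul_left_cancel₀ hz (by linear_combination -E1 / 2), rfl⟩
  · rintro (⟨rfl, rfl⟩ | ⟨rfl, rfl⟩)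
    · exact ⟨0, by ring, by ring, by ring⟩
    · exact ⟨z, by ring, by ring, by ring⟩

section Sl2

variable {K L : Type*} [CommRing K] [LieRing L] [LieAlgebra K L] {e h f : L}

theorem lie_map_self_eq_map (hfe : ⁅f, e⁆ = h) (hhe : ⁅h, e⁆ = -e) (hhf : ⁅h, f⁆ = f)
    (A : L →ₗ[K] L) (hAe : A e = e) (hAh : A h = e + h) (hAf : A f = h + f) (x y z : K) :
    ⁅A (x • e + y • h + z • f), x • e + y • h + z • f⁆ =
      A ((y ^ 2 - x * z + y * z + z ^ 2) • e + (-(y * z) - z ^ 2) • h + z ^ 2 • f) := by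
  have heh : ⁅e, h⁆ = e := by rw [← lie_skew, hhe, neg_neg]
  have hef : ⁅e, f⁆ = -h := by rw [← lie_skew, hfe]
  have hfh : ⁅f, h⁆ = -f := by rw [← lie_skew, hhf]
  simp only [map_add, map_smul, hAe, hAh, hAf, lie_add, add_lie, lie_smul, smul_lie, lie_self,
    hfe, hhe, hhf, heh, hef, hfh, smul_zero]
  module

def IsRadial (A : L ≃ₗ[K] L) (v : L) : Prop :=
  ∃ lam : K, A.symm ⁅A v, v⁆ = lam • v

end Sl2

theorem isRadial_iff {K L : Type*} [Field K] [CharZero K] [LieRing L] [LieAlgebra K L]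
    {e h f : L} (hli : LinearIndependent K ![e, h, f])
    (hfe : ⁅f, e⁆ = h) (hhe : ⁅h, e⁆ = -e) (hhf : ⁅h, f⁆ = f)
    (A : L ≃ₗ[K] L) (hAe : A e = e) (hAh : A h = e + h) (hAf : A f = h + f) (x y z : K) :
    IsRadial A (x • e + y • h + z • f) ↔
      (y = 0 ∧ z = 0) ∨ (x = 3 / 8 * z ∧ y = -(1 / 2) * z) := by
  rw [← radial_coords_iff, IsRadial]
  refine exists_congr fun lam => ?_
  have key := lie_map_self_eq_map hfe hhe hhf A.toLinearMap hAe hAh hAf x y z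
  rw [LinearEquiv.coe_coe] at key
  rw [key, LinearEquiv.symm_apply_apply]
  constructor
  · intro H
    exact hli.eq_and_eq_and_eq_of_three (H.trans (by module))
  · rintro ⟨E1, E2, E3⟩
    rw [E1, E2, E3]
    module

/-- In `𝔰𝔩(2,ℝ)` with basis `e,h,f` (`[f,e]=h`, `[h,e]=-e`, `[h,f]=f`) and `A e = e`,
`A h = e + h`, `A f = h + f`, the only lines `ℝv`, `v ≠ 0`, consisting of radial solutions
of the geodesic equation (i.e. `A⁻¹[Av,v] = λ v` for some `λ`) are `ℝ e` and `ℝ v₀` where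
`v₀ = (3/8)e - (1/2)h + f`. -/
theorem stmt_6 {L : Type*} [LieRing L] [LieAlgebra ℝ L]
    (e h f : L) (b : Module.Basis (Fin 3) ℝ L)
    (hb0 : b 0 = e) (hb1 : b 1 = h) (hb2 : b 2 = f)
    (hfe : ⁅f, e⁆ = h) (hhe : ⁅h, e⁆ = -e) (hhf : ⁅h, f⁆ = f)
    (A : L ≃ₗ[ℝ] L) (hAe : A e = e) (hAh : A h = e + h) (hAf : A f = h + f) :
    ∀ v : L, v ≠ 0 →
      ((∃ lam : ℝ, A.symm ⁅A v, v⁆ = lam • v) ↔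
        ((∃ c : ℝ, v = c • e) ∨
         (∃ c : ℝ, v = c • ((3/8 : ℝ) • e - (1/2 : ℝ) • h + f)))) := by
  have hli : LinearIndependent ℝ ![e, h, f] :=
    hb0 ▸ hb1 ▸ hb2 ▸ b.coe_eq_three ▸ b.linearIndependent
  intro v _
  obtain ⟨x, y, z, hv⟩ := b.exists_eq_three v
  rw [hb0, hb1, hb2] at hv
  subst hv
  refine (isRadial_iff hli hfe hhe hhf A hAe hAh hAf x y z).trans ⟨?_, ?_⟩
  · rintro (⟨rfl, rfl⟩ | ⟨rfl, rfl⟩)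
    · exact .inl ⟨x, by module⟩
    · exact .inr ⟨z, by module⟩
  · rintro (⟨c, hc⟩ | ⟨c, hc⟩)
    · obtain ⟨-, hy, hz⟩ := hli.eq_and_eq_and_eq_of_three
        (hc.trans (by module : c • e = c • e + (0 : ℝ) • h + (0 : ℝ) • f))
      exact .inl ⟨hy, hz⟩
    · obtain ⟨hx, hy, rfl⟩ := hli.eq_and_eq_and_eq_of_three (hc.trans (by module :
        _ = (3 / 8 * c) • e + (-(1 / 2) * c) • h + c • f))
      exact .inr ⟨hx, hy⟩
end

section
/- Let σ : 𝔰𝔩(2,ℝ) → ℝ be the coordinate functional along v₀ in the basis e, h, v₀ (i.e. σ(xe + yh + cv₀) = c). Then σ is equivariant for the geodesic vector field: σ(A^{-1}[Av, v]) = σ(v)² for all v ∈ 𝔰𝔩(2,ℝ), where v₀ = (3/8)e - (1/2)h + f and A is as above. -/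
/-!
Write `v = x e + y h + z f`; the coordinate along `v₀` in the basis `e, h, v₀` is the
`f`-coordinate `z`, since `v₀ ≡ f` modulo `e, h`. The map `A` is unipotent and upper
triangular in `e, h, f`, so `A⁻¹` preserves the `f`-coordinate, and the `f`-coordinate of
`⁅Av, v⁆ = ⁅(x+y) e + (y+z) h + z f, x e + y h + z f⁆` comes only from `⁅h, f⁆ = f`:
it is `(y+z) z - z y = z²`.
-/

section Coordinates

variable {R M : Type*} [CommRing R] [AddCommGroup M] [Module R M] {e h f : M}

theorem Module.Basis.repr_two_smul_add_smul_add_smul (b : Module.Basis (Fin 3) R M)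
    {α β : R} (hb0 : b 0 = e) (hb1 : b 1 = h) (hb2 : b 2 = α • e + β • h + f) (p q r : R) :
    b.repr (p • e + q • h + r • f) 2 = r := by
  have hw : p • e + q • h + r • f = (p - α * r) • b 0 + (q - β * r) • b 1 + r • b 2 := by
    rw [hb0, hb1, hb2]; module
  simp [hw]

theorem Module.Basis.exists_eq_smul_add_smul_add_repr_two_smul (b : Module.Basis (Fin 3) R M)
    {α β : R} (hb0 : b 0 = e) (hb1 : b 1 = h) (hb2 : b 2 = α • e + β • h + f) (v : M) :
    ∃ p q : R, v = p • e + q • h + b.repr v 2 • f := by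
  refine ⟨b.repr v 0 + α * b.repr v 2, b.repr v 1 + β * b.repr v 2, ?_⟩
  conv_lhs => rw [← b.sum_repr v]
  rw [Fin.sum_univ_three, hb0, hb1, hb2]
  module

end Coordinates

section Bracket

variable {R L : Type*} [CommRing R] [LieRing L] [LieAlgebra R L] {e h f : L}

theorem lie_smul_add_smul_add_smul (hfe : ⁅f, e⁆ = h) (hhe : ⁅h, e⁆ = -e) (hhf : ⁅h, f⁆ = f)
    (a b c x y z : R) :
    ⁅a • e + b • h + c • f, x • e + y • h + z • f⁆ =
      (a * y - b * x) • e + (c * x - a * z) • h + (b * z - c * y) • f := by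
  have heh : ⁅e, h⁆ = e := by rw [← lie_skew, hhe, neg_neg]
  have hef : ⁅e, f⁆ = -h := by rw [← lie_skew, hfe]
  have hfh : ⁅f, h⁆ = -f := by rw [← lie_skew, hhf]
  simp only [lie_add, add_lie, lie_smul, smul_lie, lie_self, heh, hef, hfh, hfe, hhe, hhf]
  module

end Bracket

section Unipotent

variable {R M : Type*} [CommRing R] [AddCommGroup M] [Module R M] {e h f : M}
  {A : M ≃ₗ[R] M}

theorem LinearEquiv.apply_smul_add_smul_add_smul (hAe : A e = e) (hAh : A h = e + h)
    (hAf : A f = h + f) (x y z : R) :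
    A (x • e + y • h + z • f) = (x + y) • e + (y + z) • h + z • f := by
  simp only [map_add, map_smul, hAe, hAh, hAf]
  module

theorem LinearEquiv.symm_apply_smul_add_smul_add_smul (hAe : A e = e) (hAh : A h = e + h)
    (hAf : A f = h + f) (p q r : R) :
    A.symm (p • e + q • h + r • f) = (p - q + r) • e + (q - r) • h + r • f := by
  rw [LinearEquiv.symm_apply_eq, LinearEquiv.apply_smul_add_smul_add_smul hAe hAh hAf]
  module

end Unipotent

theorem stmt_7_general {L : Type*} [LieRing L] [LieAlgebra ℝ L]
    (e h f : L)
    (hfe : ⁅f, e⁆ = h) (hhe : ⁅h, e⁆ = -e) (hhf : ⁅h, f⁆ = f)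
    (A : L ≃ₗ[ℝ] L) (hAe : A e = e) (hAh : A h = e + h) (hAf : A f = h + f)
    (b' : Module.Basis (Fin 3) ℝ L)
    (hb'0 : b' 0 = e) (hb'1 : b' 1 = h)
    (hb'2 : b' 2 = (3/8 : ℝ) • e - (1/2 : ℝ) • h + f)
    (σ : L → ℝ) (hσ : ∀ v : L, σ v = b'.repr v 2) :
    ∀ v : L, σ (A.symm ⁅A v, v⁆) = (σ v) ^ 2 := by
  have hb'2' : b' 2 = (3/8 : ℝ) • e + (-1/2 : ℝ) • h + f := by rw [hb'2]; module
  intro v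
  obtain ⟨x, y, hv⟩ := b'.exists_eq_smul_add_smul_add_repr_two_smul hb'0 hb'1 hb'2' v
  have hσv : σ v = b'.repr v 2 := hσ v
  generalize b'.repr v 2 = z at hv hσv
  rw [hσv, hσ, hv, A.apply_smul_add_smul_add_smul hAe hAh hAf,
    lie_smul_add_smul_add_smul hfe hhe hhf, A.symm_apply_smul_add_smul_add_smul hAe hAh hAf,
    b'.repr_two_smul_add_smul_add_smul hb'0 hb'1 hb'2']
  ring

/-- With `𝔰𝔩(2,ℝ)`, basis `e,h,f` and `A` as before, let `σ` be the `v₀`-coordinate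
functional in the basis `e, h, v₀` where `v₀ = (3/8)e - (1/2)h + f`.  Then `σ` is
equivariant for the geodesic vector field: `σ(A⁻¹[Av,v]) = σ(v)²` for all `v`. -/
theorem stmt_7 {L : Type*} [LieRing L] [LieAlgebra ℝ L]
    (e h f : L) (b : Module.Basis (Fin 3) ℝ L)
    (hb0 : b 0 = e) (hb1 : b 1 = h) (hb2 : b 2 = f)
    (hfe : ⁅f, e⁆ = h) (hhe : ⁅h, e⁆ = -e) (hhf : ⁅h, f⁆ = f)
    (A : L ≃ₗ[ℝ] L) (hAe : A e = e) (hAh : A h = e + h) (hAf : A f = h + f)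
    (b' : Module.Basis (Fin 3) ℝ L)
    (hb'0 : b' 0 = e) (hb'1 : b' 1 = h)
    (hb'2 : b' 2 = (3/8 : ℝ) • e - (1/2 : ℝ) • h + f)
    (σ : L → ℝ) (hσ : ∀ v : L, σ v = b'.repr v 2) :
    ∀ v : L, σ (A.symm ⁅A v, v⁆) = (σ v) ^ 2 :=
  stmt_7_general e h f hfe hhe hhf A hAe hAh hAf b' hb'0 hb'1 hb'2 σ hσ
end

section
/- In the Lie algebra 𝔰𝔬𝔩 = span(e₁,e₂,h) with brackets [h,e₁]=e₁, [h,e₂]=-e₂, [e₁,e₂]=0, endowed with the Lorentz inner product q with q(e₁,e₁)=q(e₁,e₂)=q(h,e₂)=q(h,h)=0, q(e₁,h)=q(e₂,e₂)=1, the Euler-Arnold field is F(x e₁ + y e₂ + z h) = (y² - xz) e₁ - yz e₂ + z² h. -/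
/-! Since `q` is nondegenerate (its Gram matrix in `(e₁, e₂, h)` is the antidiagonal one), `F v` is
determined by the three numbers `q (F v) w = q v ⁅v, w⁆` for `w = e₁, e₂, h`; for
`v = x e₁ + y e₂ + z h` one has `ad_v e₁ = z e₁`, `ad_v e₂ = -z e₂`, `ad_v h = -x e₁ + y e₂`, and the
claimed vector has the same three pairings. -/

theorem LinearMap.SeparatingLeft.eq_of_forall_basis {R M N P ι : Type*} [CommRing R]
    [AddCommGroup M] [Module R M] [AddCommGroup N] [Module R N] [AddCommGroup P] [Module R P]
    {B : M →ₗ[R] N →ₗ[R] P} (hB : B.SeparatingLeft) (b : Module.Basis ι R N) {x y : M}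
    (h : ∀ i, B x (b i) = B y (b i)) : x = y :=
  LinearMap.ker_eq_bot.mp (LinearMap.separatingLeft_iff_ker_eq_bot.mp hB) (b.ext h)

theorem LinearMap.BilinForm.separatingLeft_of_toMatrix_eq_antidiag {K M : Type*} [Field K]
    [AddCommGroup M] [Module K M] {B : LinearMap.BilinForm K M} (b : Module.Basis (Fin 3) K M)
    (hB : LinearMap.BilinForm.toMatrix b B = !![0, 0, 1; 0, 1, 0; 1, 0, 0]) :
    B.SeparatingLeft := by
  rw [← LinearMap.BilinForm.separatingLeft_toMatrix_iff b, Matrix.separatingLeft_iff_det_ne_zero,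
    hB]
  simp [Matrix.det_fin_three]

/-- In `𝔰𝔬𝔩 = span(e₁,e₂,h)` with `[h,e₁]=e₁`, `[h,e₂]=-e₂`, `[e₁,e₂]=0` and the Lorentz
product `q` with `q(e₁,e₁)=q(e₁,e₂)=q(h,e₂)=q(h,h)=0`, `q(e₁,h)=q(e₂,e₂)=1`, the
Euler–Arnold field `F` (characterized by `q(F v, w) = q(v, [v,w])`) is
`F(x e₁ + y e₂ + z h) = (y² - xz) e₁ - yz e₂ + z² h`. -/
theorem stmt_9 {L : Type*} [LieRing L] [LieAlgebra ℝ L]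
    (e1 e2 h : L) (b : Module.Basis (Fin 3) ℝ L)
    (hb0 : b 0 = e1) (hb1 : b 1 = e2) (hb2 : b 2 = h)
    (hbr1 : ⁅h, e1⁆ = e1) (hbr2 : ⁅h, e2⁆ = -e2) (hbr3 : ⁅e1, e2⁆ = 0)
    (q : L →ₗ[ℝ] L →ₗ[ℝ] ℝ) (hqsymm : ∀ v w : L, q v w = q w v)
    (h11 : q e1 e1 = 0) (h12 : q e1 e2 = 0) (h1h : q e1 h = 1)
    (h22 : q e2 e2 = 1) (h2h : q h e2 = 0) (hhh : q h h = 0)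
    (F : L → L) (hF : ∀ v w : L, q (F v) w = q v ⁅v, w⁆) :
    ∀ x y z : ℝ, F (x • e1 + y • e2 + z • h)
      = (y ^ 2 - x * z) • e1 - (y * z) • e2 + z ^ 2 • h := by
  have h21 : q e2 e1 = 0 := hqsymm e2 e1 ▸ h12
  have hh1 : q h e1 = 1 := hqsymm h e1 ▸ h1h
  have h2h' : q e2 h = 0 := hqsymm e2 h ▸ h2h
  have hgram : LinearMap.BilinForm.toMatrix b q = !![0, 0, 1; 0, 1, 0; 1, 0, 0] := by
    ext i j
    fin_cases i <;> fin_cases j <;>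
      simp [LinearMap.BilinForm.toMatrix_apply, hb0, hb1, hb2, h11, h12, h1h, h21, h22, h2h',
        hh1, h2h, hhh]
  intro x y z
  have ad_e1 : ⁅x • e1 + y • e2 + z • h, e1⁆ = z • e1 := by
    simp [hbr1, ← lie_skew e2 e1, hbr3]
  have ad_e2 : ⁅x • e1 + y • e2 + z • h, e2⁆ = -(z • e2) := by
    simp [hbr2, hbr3]
  have ad_h : ⁅x • e1 + y • e2 + z • h, h⁆ = -(x • e1) + y • e2 := by
    simp [← lie_skew e1 h, ← lie_skew e2 h, hbr1, hbr2]
  refine (LinearMap.BilinForm.separatingLeft_of_toMatrix_eq_antidiag b hgram).eq_of_forall_basis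
    b fun i => ?_
  rw [hF]
  fin_cases i <;>
    simp [hb0, hb1, hb2, ad_e1, ad_e2, ad_h, h11, h12, h1h, h21, h22, h2h', hh1, h2h, hhh] <;> ring
end

section
/- In 𝔰𝔬𝔩 with the metric q as above, the only nonzero vectors v with F(v) = ad_v^* v ∈ ℝ v are the elements of ℝe₁ (with F(v)=0) and of ℝh (with F(λh) = λ² h). In particular the nonconstant radial directions form exactly the line ℝh. -/
/-!
The metric `q` pairs the basis `(e₁, e₂, h)` with the dual frame `(h, e₂, e₁)`, so every `w`
has `q`-coordinates `w = q(w,h) e₁ + q(w,e₂) e₂ + q(w,e₁) h`. Pairing `F v` with `e₁, e₂, h`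
and using the brackets gives `F(x e₁ + y e₂ + z h) = (y² - xz) e₁ - yz e₂ + z² h`.
The eigenvector equations `z² = λz`, `-yz = λy`, `y² - xz = λx` force `y = 0` and `xz = 0`.
-/

theorem Module.Basis.repr_eq_of_biorthogonal {ι K M : Type*} [CommRing K] [AddCommGroup M]
    [Module K M] [DecidableEq ι] (b : Module.Basis ι K M) (q : M →ₗ[K] M →ₗ[K] K) (d : ι → M)
    (hd : ∀ i j, q (b i) (d j) = if i = j then 1 else 0) (w : M) (j : ι) :
    b.repr w j = q w (d j) :=
  LinearMap.congr_fun (b.ext (f₁ := b.coord j) (f₂ := q.flip (d j)) fun i => by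
    simp [hd, Finsupp.single_apply]) w

namespace Sol

variable {K L : Type*} [CommRing K] [LieRing L] [LieAlgebra K L] {e1 e2 h : L}
  {q : L →ₗ[K] L →ₗ[K] K}

theorem eq_expansion_of_gram (b : Module.Basis (Fin 3) K L)
    (hb0 : b 0 = e1) (hb1 : b 1 = e2) (hb2 : b 2 = h) (hqsymm : ∀ v w : L, q v w = q w v)
    (h11 : q e1 e1 = 0) (h12 : q e1 e2 = 0) (h1h : q e1 h = 1)
    (h22 : q e2 e2 = 1) (h2h : q h e2 = 0) (hhh : q h h = 0) (w : L) :
    w = q w h • e1 + q w e2 • e2 + q w e1 • h := by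
  have hd : ∀ i j, q (b i) (![h, e2, e1] j) = if i = j then 1 else 0 := by
    intro i j
    fin_cases i <;> fin_cases j <;>
      simp [hb0, hb1, hb2, h11, h12, h1h, h22, h2h, hhh, hqsymm e2 e1, hqsymm h e1, hqsymm e2 h]
  conv_lhs => rw [← b.sum_repr w]
  simp [Fin.sum_univ_three, b.repr_eq_of_biorthogonal q _ hd, hb0, hb1, hb2]

theorem lie_e1 (hrep : ∀ w : L, w = q w h • e1 + q w e2 • e2 + q w e1 • h)
    (hbr1 : ⁅h, e1⁆ = e1) (hbr3 : ⁅e1, e2⁆ = 0) (v : L) :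
    ⁅v, e1⁆ = q v e1 • e1 := by
  have hbr3' : ⁅e2, e1⁆ = 0 := by rw [← lie_skew, hbr3, neg_zero]
  conv_lhs => rw [hrep v]
  simp [add_lie, smul_lie, hbr1, hbr3']

theorem lie_e2 (hrep : ∀ w : L, w = q w h • e1 + q w e2 • e2 + q w e1 • h)
    (hbr2 : ⁅h, e2⁆ = -e2) (hbr3 : ⁅e1, e2⁆ = 0) (v : L) :
    ⁅v, e2⁆ = -q v e1 • e2 := by
  conv_lhs => rw [hrep v]
  simp [add_lie, smul_lie, hbr2, hbr3]

theorem lie_h (hrep : ∀ w : L, w = q w h • e1 + q w e2 • e2 + q w e1 • h)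
    (hbr1 : ⁅h, e1⁆ = e1) (hbr2 : ⁅h, e2⁆ = -e2) (v : L) :
    ⁅v, h⁆ = -q v h • e1 + q v e2 • e2 := by
  have hbr1' : ⁅e1, h⁆ = -e1 := by rw [← lie_skew, hbr1]
  have hbr2' : ⁅e2, h⁆ = e2 := by rw [← lie_skew, hbr2, neg_neg]
  conv_lhs => rw [hrep v]
  simp [add_lie, smul_lie, hbr1', hbr2']

variable {F : L → L}

theorem q_F_e1 (hrep : ∀ w : L, w = q w h • e1 + q w e2 • e2 + q w e1 • h)
    (hbr1 : ⁅h, e1⁆ = e1) (hbr3 : ⁅e1, e2⁆ = 0) (hF : ∀ v w : L, q (F v) w = q v ⁅v, w⁆)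
    (v : L) : q (F v) e1 = q v e1 ^ 2 := by
  rw [hF, lie_e1 hrep hbr1 hbr3, map_smul, smul_eq_mul, sq]

theorem q_F_e2 (hrep : ∀ w : L, w = q w h • e1 + q w e2 • e2 + q w e1 • h)
    (hbr2 : ⁅h, e2⁆ = -e2) (hbr3 : ⁅e1, e2⁆ = 0) (hF : ∀ v w : L, q (F v) w = q v ⁅v, w⁆)
    (v : L) : q (F v) e2 = -(q v e2 * q v e1) := by
  rw [hF, lie_e2 hrep hbr2 hbr3, map_smul, smul_eq_mul, neg_mul, mul_comm]

theorem q_F_h (hrep : ∀ w : L, w = q w h • e1 + q w e2 • e2 + q w e1 • h)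
    (hbr1 : ⁅h, e1⁆ = e1) (hbr2 : ⁅h, e2⁆ = -e2) (hF : ∀ v w : L, q (F v) w = q v ⁅v, w⁆)
    (v : L) : q (F v) h = q v e2 ^ 2 - q v h * q v e1 := by
  rw [hF, lie_h hrep hbr1 hbr2, map_add, map_smul, map_smul, smul_eq_mul, smul_eq_mul]
  ring

theorem F_apply (hrep : ∀ w : L, w = q w h • e1 + q w e2 • e2 + q w e1 • h)
    (hbr1 : ⁅h, e1⁆ = e1) (hbr2 : ⁅h, e2⁆ = -e2) (hbr3 : ⁅e1, e2⁆ = 0)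
    (hF : ∀ v w : L, q (F v) w = q v ⁅v, w⁆) (v : L) :
    F v = (q v e2 ^ 2 - q v h * q v e1) • e1 - (q v e2 * q v e1) • e2 + q v e1 ^ 2 • h := by
  rw [hrep (F v), q_F_h hrep hbr1 hbr2 hF, q_F_e2 hrep hbr2 hbr3 hF, q_F_e1 hrep hbr1 hbr3 hF,
    neg_smul, ← sub_eq_add_neg]

theorem eq_zero_of_eigen_eqns {K : Type*} [Field K] [NeZero (2 : K)] {x y z lam : K}
    (h1 : z ^ 2 = lam * z) (h2 : -(y * z) = lam * y) (h3 : y ^ 2 - x * z = lam * x) :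
    y = 0 ∧ (x = 0 ∨ z = 0) := by
  by_cases hz : z = 0
  · subst hz
    have hy3 : y ^ 3 = 0 := by linear_combination y * h3 - x * h2
    exact ⟨pow_eq_zero_iff (by norm_num) |>.mp hy3, Or.inr rfl⟩
  have hlam : lam = z := (mul_right_cancel₀ hz (by linear_combination h1)).symm
  subst hlam
  have hy : y = 0 := by
    have : (2 * lam) * y = 0 := by linear_combination -h2
    simpa [hz, two_ne_zero] using this
  subst hy
  have : (2 * lam) * x = 0 := by linear_combination -h3
  exact ⟨rfl, Or.inl (by simpa [hz, two_ne_zero] using this)⟩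

end Sol

/-- In `𝔰𝔬𝔩` with the metric `q` as before, the only nonzero vectors `v` with
`F v = ad_v^* v ∈ ℝ v` are the elements of `ℝe₁` (where `F v = 0`) and of `ℝh`
(where `F (c•h) = c² • h`). -/
theorem stmt_10 {L : Type*} [LieRing L] [LieAlgebra ℝ L]
    (e1 e2 h : L) (b : Module.Basis (Fin 3) ℝ L)
    (hb0 : b 0 = e1) (hb1 : b 1 = e2) (hb2 : b 2 = h)
    (hbr1 : ⁅h, e1⁆ = e1) (hbr2 : ⁅h, e2⁆ = -e2) (hbr3 : ⁅e1, e2⁆ = 0)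
    (q : L →ₗ[ℝ] L →ₗ[ℝ] ℝ) (hqsymm : ∀ v w : L, q v w = q w v)
    (h11 : q e1 e1 = 0) (h12 : q e1 e2 = 0) (h1h : q e1 h = 1)
    (h22 : q e2 e2 = 1) (h2h : q h e2 = 0) (hhh : q h h = 0)
    (F : L → L) (hF : ∀ v w : L, q (F v) w = q v ⁅v, w⁆) :
    (∀ c : ℝ, F (c • e1) = 0) ∧ (∀ c : ℝ, F (c • h) = c ^ 2 • h) ∧
    (∀ v : L, v ≠ 0 →
      ((∃ lam : ℝ, F v = lam • v) ↔
        ((∃ c : ℝ, v = c • e1) ∨ (∃ c : ℝ, v = c • h)))) := by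
  have hrep := Sol.eq_expansion_of_gram b hb0 hb1 hb2 hqsymm h11 h12 h1h h22 h2h hhh
  have hF_e1 : ∀ c : ℝ, F (c • e1) = 0 := fun c => by
    simp [Sol.F_apply hrep hbr1 hbr2 hbr3 hF, h11, h12, h1h]
  have hF_h : ∀ c : ℝ, F (c • h) = c ^ 2 • h := fun c => by
    simp [Sol.F_apply hrep hbr1 hbr2 hbr3 hF, hqsymm h e1, h1h, h2h, hhh]
  refine ⟨hF_e1, hF_h, fun v _ => ⟨?_, ?_⟩⟩
  · rintro ⟨lam, hlam⟩
    have hcoord : ∀ w, q (F v) w = lam * q v w := fun w => by simp [hlam]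
    obtain ⟨hy, hx | hz⟩ := Sol.eq_zero_of_eigen_eqns
      ((Sol.q_F_e1 hrep hbr1 hbr3 hF v).symm.trans (hcoord e1))
      ((Sol.q_F_e2 hrep hbr2 hbr3 hF v).symm.trans (hcoord e2))
      ((Sol.q_F_h hrep hbr1 hbr2 hF v).symm.trans (hcoord h))
    · exact Or.inr ⟨q v e1, (hrep v).trans (by simp [hx, hy])⟩
    · exact Or.inl ⟨q v h, (hrep v).trans (by simp [hy, hz])⟩
  · rintro (⟨c, rfl⟩ | ⟨c, rfl⟩)
    · exact ⟨0, by rw [hF_e1, zero_smul]⟩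
    · exact ⟨c, by rw [hF_h, smul_smul, sq]⟩
end

section
/- For the vector field F(x,y,z) = (xy - yz, z², -yz) on ℝ³, for every v ∈ ℝ³, F(v) ∈ ℝv implies F(v) = 0. -/
/-- The vector field `F(x,y,z) = (xy - yz, z², -yz)` on `ℝ³` has no radial points with
nonzero factor: there is no `(x,y,z)` with `z ≠ 0`, `λ ≠ 0` and `F(x,y,z) = λ(x,y,z)`;
moreover, whenever `F v = λ • v`, in fact `F v = 0`. -/
theorem stmt_13 :
    (¬ ∃ x y z lam : ℝ, z ≠ 0 ∧ lam ≠ 0 ∧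
      ((x * y - y * z, z ^ 2, -(y * z)) : ℝ × ℝ × ℝ) = lam • ((x, y, z) : ℝ × ℝ × ℝ)) ∧
    (∀ x y z lam : ℝ,
      ((x * y - y * z, z ^ 2, -(y * z)) : ℝ × ℝ × ℝ) = lam • ((x, y, z) : ℝ × ℝ × ℝ) →
      ((x * y - y * z, z ^ 2, -(y * z)) : ℝ × ℝ × ℝ) = (0, 0, 0)) := by
  have key : ∀ x y z lam : ℝ,
      ((x * y - y * z, z ^ 2, -(y * z)) : ℝ × ℝ × ℝ) = lam • ((x, y, z) : ℝ × ℝ × ℝ) →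
      z = 0 ∧ x * y = 0 := by
    intro x y z lam h
    simp only [Prod.ext_iff, Prod.smul_mk, smul_eq_mul] at h
    obtain ⟨h1, h2, h3⟩ := h
    have hz3 : z * (z ^ 2 + y ^ 2) = 0 := by linear_combination z * h2 - y * h3
    have hz : z = 0 := by
      by_contra hz
      have : z ^ 2 + y ^ 2 = 0 := by
        rcases mul_eq_zero.mp hz3 with h | h
        · exact absurd h hz
        · exact h
      have hzsq : 0 < z ^ 2 := (sq_nonneg z).lt_of_ne (Ne.symm (pow_ne_zero 2 hz))
      nlinarith [sq_nonneg y]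
    subst hz
    refine ⟨rfl, ?_⟩
    rcases eq_or_ne lam 0 with h0 | h0
    · subst h0; linarith
    · have hy : y = 0 := by
        have : lam * y = 0 := by linarith
        exact (mul_eq_zero.mp this).resolve_left h0
      simp [hy]
  constructor
  · rintro ⟨x, y, z, lam, hz, hlam, h⟩
    exact hz (key x y z lam h).1
  · intro x y z lam h
    obtain ⟨hz, hxy⟩ := key x y z lam h
    subst hz
    simp [hxy]
end
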